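/- For partitioned permutations (𝒱,π), (𝒲,σ) of {1,…,n}, the equation (𝒱,π)·(𝒲,σ) = (𝒱∨𝒲, πσ) (i.e., |(𝒱,π)|+|(𝒲,σ)| = |(𝒱∨𝒲,πσ)|) holds if and only if all four of the following hold: (1) |π|+|σ|+|πσ| = 2|π∨σ|; (2) |𝒱|+|π∨σ| = |π|+|𝒱∨σ|; (3) |𝒲|+|π∨σ| = |σ|+|π∨𝒲|; (4) |𝒱∨σ|+|π∨𝒲| = |𝒱∨𝒲|+|π∨σ|. -/

import Mathlib

/-!
Write `d₁, …, d₄` for the differences of the two sides of (1)–(4), oriented so that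
`d₁ = |π| + |σ| + |πσ| - 2|π∨σ|`, `d₂ = |𝒱| + |π∨σ| - |π| - |𝒱∨σ|`,
`d₃ = |𝒲| + |π∨σ| - |σ| - |π∨𝒲|`, `d₄ = |𝒱∨σ| + |π∨𝒲| - |𝒱∨𝒲| - |π∨σ|`. Then
`|(𝒱,π)| + |(𝒲,σ)| - |(𝒱∨𝒲,πσ)| = d₁ + 2d₂ + 2d₃ + 2d₄`, and every `dᵢ` is nonnegative, so the
equation holds exactly when all four vanish.

`d₂, d₃, d₄ ≥ 0` are instances of the semimodularity `|A| + |B ∨ C| ≤ |B| + |A ∨ C|` (`A ≤ B`) of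
the rank on the partition lattice, proved by merging the classes of `A` one pair at a time.
`d₁ ≥ 0` is proved by induction on `|σ|`: for `τ = (a σa)` the pair `(πτ, τσ)` has the same
product, `τσ` has one more cycle than `σ`, and `πτ` either has one more cycle than `π` or leaves
the join `π ∨ σ` unchanged.
-/

open Equiv

def orbitSetoid {α : Type*} (π : Equiv.Perm α) : Setoid α where
  r := π.SameCycle
  iseqv := ⟨fun x => Equiv.Perm.SameCycle.refl π x, fun h => h.symm, fun h h' => h.trans h'⟩

noncomputable def cycleCount {n : ℕ} (π : Equiv.Perm (Fin n)) : ℕ :=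
  Nat.card (Quotient (orbitSetoid π))

noncomputable def pLen {n : ℕ} (V : Setoid (Fin n)) : ℤ :=
  (n : ℤ) - Nat.card (Quotient V)

noncomputable def permLen {n : ℕ} (π : Equiv.Perm (Fin n)) : ℤ :=
  (n : ℤ) - cycleCount π

theorem orbitSetoid_mul_le {α : Type*} (π σ : Equiv.Perm α) :
    orbitSetoid (π * σ) ≤ orbitSetoid π ⊔ orbitSetoid σ := by
  set S := orbitSetoid π ⊔ orbitSetoid σ with hS
  have hstep : ∀ x, S x ((π * σ) x) := by
    intro x
    have h1 : S x (σ x) := Setoid.le_def.mp le_sup_right ⟨1, by simp⟩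
    have h2 : S (σ x) (π (σ x)) := Setoid.le_def.mp le_sup_left ⟨1, by simp⟩
    exact S.iseqv.trans h1 h2
  have hpow : ∀ (k : ℤ) (x : α), S x (((π * σ) ^ k) x) := by
    intro k
    induction k using Int.induction_on with
    | zero => intro x; simpa using S.iseqv.refl x
    | succ k ih =>
        intro x
        have h : ((π * σ) ^ ((k : ℤ) + 1)) x = ((π * σ) ^ (k : ℤ)) ((π * σ) x) := by
          rw [zpow_add_one]
          simp [Equiv.Perm.mul_apply]
        rw [h]
        exact S.iseqv.trans (hstep x) (ih ((π * σ) x))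
    | pred k ih =>
        intro x
        have h : ((π * σ) ^ (-(k : ℤ) - 1)) x = ((π * σ) ^ (-(k : ℤ))) ((π * σ)⁻¹ x) := by
          rw [zpow_sub_one]
          simp [Equiv.Perm.mul_apply]
        rw [h]
        have hinv : S x ((π * σ)⁻¹ x) := by
          have h2 := hstep ((π * σ)⁻¹ x)
          rw [show (π * σ) ((π * σ)⁻¹ x) = x by simp] at h2
          exact S.iseqv.symm h2
        exact S.iseqv.trans hinv (ih ((π * σ)⁻¹ x))
  rw [Setoid.le_def]
  rintro x y ⟨k, hk⟩
  exact hk ▸ hpow k x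

/-- A partitioned permutation: a pair `(𝒱, π)` with `𝒱` a partition of `{1,…,n}`
(encoded as a setoid on `Fin n`) coarser than the orbit partition of `π`. -/
structure PartitionedPerm (n : ℕ) where
  part : Setoid (Fin n)
  perm : Equiv.Perm (Fin n)
  hle : orbitSetoid perm ≤ part

/-- The length `|(𝒱,π)| := 2|𝒱| − |π|` of a partitioned permutation. -/
noncomputable def ppLen {n : ℕ} (a : PartitionedPerm n) : ℤ :=
  2 * pLen a.part - permLen a.perm

namespace Setoid

variable {α : Type*}

def mergeClasses (S : Setoid α) (a b : α) : Setoid α where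
  r x y := S x y ∨ (S x a ∧ S b y) ∨ (S x b ∧ S a y)
  iseqv := by
    refine ⟨fun x => Or.inl (S.refl' x), ?_, ?_⟩
    · rintro x y (h | ⟨h₁, h₂⟩ | ⟨h₁, h₂⟩)
      · exact Or.inl (S.symm' h)
      · exact Or.inr (Or.inr ⟨S.symm' h₂, S.symm' h₁⟩)
      · exact Or.inr (Or.inl ⟨S.symm' h₂, S.symm' h₁⟩)
    · rintro x y z (h | ⟨h₁, h₂⟩ | ⟨h₁, h₂⟩) (g | ⟨g₁, g₂⟩ | ⟨g₁, g₂⟩)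
      · exact Or.inl (S.trans' h g)
      · exact Or.inr (Or.inl ⟨S.trans' h g₁, g₂⟩)
      · exact Or.inr (Or.inr ⟨S.trans' h g₁, g₂⟩)
      · exact Or.inr (Or.inl ⟨h₁, S.trans' h₂ g⟩)
      · exact Or.inl (S.trans' h₁ (S.trans' (S.symm' (S.trans' h₂ g₁)) g₂))
      · exact Or.inl (S.trans' h₁ g₂)
      · exact Or.inr (Or.inr ⟨h₁, S.trans' h₂ g⟩)
      · exact Or.inl (S.trans' h₁ g₂)
      · exact Or.inl (S.trans' h₁ (S.trans' (S.symm' (S.trans' h₂ g₁)) g₂))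

theorem le_mergeClasses (S : Setoid α) (a b : α) : S ≤ mergeClasses S a b :=
  fun _ _ h => Or.inl h

theorem mergeClasses_rel (S : Setoid α) (a b : α) : mergeClasses S a b a b :=
  Or.inr (Or.inl ⟨S.refl' a, S.refl' b⟩)

theorem mergeClasses_le {S T : Setoid α} {a b : α} (hST : S ≤ T) (hab : T a b) :
    mergeClasses S a b ≤ T := by
  rintro x y (h | ⟨h₁, h₂⟩ | ⟨h₁, h₂⟩)
  · exact hST h
  · exact T.trans' (hST h₁) (T.trans' hab (hST h₂))
  · exact T.trans' (hST h₁) (T.trans' (T.symm' hab) (hST h₂))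

noncomputable def numClasses (S : Setoid α) : ℕ := Nat.card (Quotient S)

variable [Finite α]

theorem numClasses_le_card (S : Setoid α) : numClasses S ≤ Nat.card α :=
  Nat.card_le_card_of_surjective _ Quotient.mk_surjective

theorem numClasses_anti {S T : Setoid α} (h : S ≤ T) : numClasses T ≤ numClasses S :=
  Nat.card_le_card_of_surjective _ (Quot.map_surjective h Function.surjective_id)

theorem numClasses_le_numClasses_mergeClasses_add_one (S : Setoid α) (a b : α) :
    numClasses S ≤ numClasses (mergeClasses S a b) + 1 := by
  classical
  let f : Quotient S → Option (Quotient (mergeClasses S a b)) := fun q =>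
    if q = ⟦b⟧ then none else some (Quot.map id (le_mergeClasses S a b) q)
  have hf : f.Injective := by
    refine Quotient.ind₂ fun x y hxy => ?_
    by_cases hx : (⟦x⟧ : Quotient S) = ⟦b⟧ <;> by_cases hy : (⟦y⟧ : Quotient S) = ⟦b⟧
    · exact hx.trans hy.symm
    all_goals simp only [f, hx, hy, if_true, if_false, reduceCtorEq] at hxy
    rcases Quotient.exact (Option.some_injective _ hxy) with h | ⟨-, h⟩ | ⟨h, -⟩
    · exact Quotient.sound h
    · exact absurd (Quotient.sound (S.symm' h)) hy
    · exact absurd (Quotient.sound h) hx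
  simpa [numClasses] using Nat.card_le_card_of_injective f hf

theorem numClasses_mergeClasses_lt {S : Setoid α} {a b : α} (hab : ¬ S a b) :
    numClasses (mergeClasses S a b) < numClasses S := by
  by_contra! hle
  have hbij := (Quot.map_surjective (le_mergeClasses S a b) Function.surjective_id
    ).bijective_of_nat_card_le hle
  exact hab (Quotient.exact (hbij.injective (a₁ := ⟦a⟧) (a₂ := ⟦b⟧)
    (Quotient.sound (mergeClasses_rel S a b))))

theorem numClasses_lt_of_le_of_rel {S T : Setoid α} {a b : α} (hST : S ≤ T) (hT : T a b)
    (hS : ¬ S a b) : numClasses T < numClasses S :=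
  (numClasses_anti (mergeClasses_le hST hT)).trans_lt (numClasses_mergeClasses_lt hS)

theorem numClasses_le_add_one_of_le_mergeClasses {S T : Setoid α} {a b : α}
    (h : T ≤ mergeClasses S a b) : numClasses S ≤ numClasses T + 1 :=
  (numClasses_le_numClasses_mergeClasses_add_one S a b).trans
    (Nat.add_le_add_right (numClasses_anti h) 1)

theorem numClasses_add_numClasses_sup_le {A B : Setoid α} (hAB : A ≤ B) (C : Setoid α) :
    numClasses B + numClasses (A ⊔ C) ≤ numClasses A + numClasses (B ⊔ C) := by
  induction hk : numClasses A using Nat.strong_induction_on generalizing A with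
  | _ k ih =>
  obtain rfl | hne := eq_or_ne A B
  · omega
  obtain ⟨a, b, hB, hA⟩ : ∃ a b, B a b ∧ ¬ A a b := by
    by_contra! h
    exact hne (le_antisymm hAB fun a b hab => h a b hab)
  have hlt : numClasses (mergeClasses A a b) < k := hk ▸ numClasses_mergeClasses_lt hA
  have hstep := ih _ hlt (mergeClasses_le hAB hB) rfl
  have hsup : numClasses (A ⊔ C) ≤ numClasses (mergeClasses A a b ⊔ C) + 1 :=
    numClasses_le_add_one_of_le_mergeClasses <| sup_le
      (mergeClasses_le (le_sup_left.trans (le_mergeClasses _ a b)) (mergeClasses_rel _ a b))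
      (le_sup_right.trans (le_mergeClasses _ a b))
  omega

end Setoid

open Setoid Perm

section Orbits

variable {α : Type*} [Finite α]

theorem orbitSetoid_le_of_forall_rel {T : Setoid α} {π : Perm α} (h : ∀ x, T x (π x)) :
    orbitSetoid π ≤ T := by
  rintro x _ hxy
  obtain ⟨i, rfl⟩ := hxy.exists_nat_pow_eq
  clear hxy
  induction i with
  | zero => exact T.refl' x
  | succ i ih => exact T.trans' ih (by rw [pow_succ', mul_apply]; exact h _)

variable [DecidableEq α]

theorem orbitSetoid_swap_le {T : Setoid α} {a b : α} (hab : T a b) : orbitSetoid (swap a b) ≤ T :=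
  orbitSetoid_le_of_forall_rel fun x => by
    rcases eq_or_ne x a with rfl | hxa
    · simpa using hab
    rcases eq_or_ne x b with rfl | hxb
    · simpa using T.symm' hab
    · exact (swap_apply_of_ne_of_ne hxa hxb).symm ▸ T.refl' x

theorem sameCycle_mul_swap_of_not_sameCycle {ρ : Perm α} {a b : α} (h : ¬ ρ.SameCycle a b) :
    (ρ * swap a b).SameCycle a b := by
  by_contra hab
  -- the orbit of `b` under `ρ * swap a b` follows the `ρ`-cycle of `a` until it meets `a`
  have hcycle : ∀ k : ℕ, (ρ * swap a b).SameCycle b ((ρ ^ (k + 1)) a) := by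
    intro k
    induction k with
    | zero => exact ⟨1, by simp⟩
    | succ k ih =>
      have hne_a : (ρ ^ (k + 1)) a ≠ a := fun e => hab (e ▸ ih).symm
      have hne_b : (ρ ^ (k + 1)) a ≠ b := fun e => h ⟨(k + 1 : ℕ), by rw [zpow_natCast]; exact e⟩
      have hstep : (ρ ^ (k + 1 + 1)) a = (ρ * swap a b) ((ρ ^ (k + 1)) a) := by
        rw [pow_succ', mul_apply, mul_apply, swap_apply_of_ne_of_ne hne_a hne_b]
      exact hstep ▸ sameCycle_apply_right.2 ih
  have hba := hcycle (orderOf ρ - 1)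
  rw [Nat.sub_add_cancel (orderOf_pos ρ), pow_orderOf_eq_one] at hba
  exact hab hba.symm

theorem numClasses_orbitSetoid_add_le_of_swap (π σ : Perm α) (a b : α) :
    numClasses (orbitSetoid π) +
        2 * numClasses (orbitSetoid (π * swap a b) ⊔ orbitSetoid (swap a b * σ)) ≤
      numClasses (orbitSetoid (π * swap a b)) + 1 +
        2 * numClasses (orbitSetoid π ⊔ orbitSetoid σ) := by
  set τ := swap a b
  set J := orbitSetoid π ⊔ orbitSetoid σ
  set J' := orbitSetoid (π * τ) ⊔ orbitSetoid (τ * σ)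
  have hτ : orbitSetoid τ ≤ mergeClasses J' a b := orbitSetoid_swap_le (mergeClasses_rel J' a b)
  have hJ : J ≤ mergeClasses J' a b := by
    have hπ : π = π * τ * τ := by simp [τ, mul_assoc]
    have hσ : σ = τ * (τ * σ) := by simp [τ, ← mul_assoc]
    refine sup_le ?_ ?_
    · rw [hπ]
      exact (orbitSetoid_mul_le _ _).trans (sup_le (le_sup_left.trans (le_mergeClasses ..)) hτ)
    · rw [hσ]
      exact (orbitSetoid_mul_le _ _).trans (sup_le hτ (le_sup_right.trans (le_mergeClasses ..)))
  by_cases hJ'ab : J' a b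
  · have hJJ' : numClasses J' ≤ numClasses J :=
      numClasses_anti (hJ.trans (mergeClasses_le le_rfl hJ'ab))
    have hπ : numClasses (orbitSetoid π) ≤ numClasses (orbitSetoid (π * τ)) + 1 :=
      numClasses_le_add_one_of_le_mergeClasses <| (orbitSetoid_mul_le _ _).trans <|
        sup_le (le_mergeClasses ..) (orbitSetoid_swap_le (mergeClasses_rel ..))
    omega
  · have hπ'ab : ¬ (π * τ).SameCycle a b := fun h =>
      hJ'ab (le_sup_left (b := orbitSetoid (τ * σ)) h)
    have hπab : π.SameCycle a b := by
      simpa [τ, mul_assoc] using sameCycle_mul_swap_of_not_sameCycle hπ'ab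
    have hπ : numClasses (orbitSetoid π) < numClasses (orbitSetoid (π * τ)) :=
      numClasses_lt_of_le_of_rel ((orbitSetoid_mul_le _ _).trans
        (sup_le le_rfl (orbitSetoid_swap_le hπab))) hπab hπ'ab
    have hJJ' : numClasses J' ≤ numClasses J + 1 := numClasses_le_add_one_of_le_mergeClasses hJ
    omega

theorem numClasses_orbitSetoid_add_le (π σ : Perm α) :
    numClasses (orbitSetoid π) + numClasses (orbitSetoid σ) + numClasses (orbitSetoid (π * σ)) ≤
      Nat.card α + 2 * numClasses (orbitSetoid π ⊔ orbitSetoid σ) := by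
  induction hm : Nat.card α - numClasses (orbitSetoid σ) using Nat.strong_induction_on
    generalizing π σ with
  | _ m ih =>
  by_cases hσ : σ = 1
  · subst hσ
    have h1 : orbitSetoid (1 : Perm α) ≤ orbitSetoid π :=
      orbitSetoid_le_of_forall_rel fun x => (orbitSetoid π).refl' x
    have h2 := numClasses_le_card (orbitSetoid (1 : Perm α))
    rw [mul_one, sup_eq_left.2 h1]
    omega
  obtain ⟨a, ha⟩ : ∃ a, σ a ≠ a := by
    by_contra! h
    exact hσ (Perm.ext h)
  have hσa : σ.SameCycle a (σ a) := ⟨1, by simp⟩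
  have hsplit : numClasses (orbitSetoid σ) < numClasses (orbitSetoid (swap a (σ a) * σ)) :=
    numClasses_lt_of_le_of_rel
      ((orbitSetoid_mul_le _ _).trans (sup_le (orbitSetoid_swap_le hσa) le_rfl)) hσa
      fun h => ha (h.eq_of_left (by simp [Function.IsFixedPt])).symm
  have hcard := numClasses_le_card (orbitSetoid (swap a (σ a) * σ))
  have hind := ih _ (by omega) (π * swap a (σ a)) (swap a (σ a) * σ) rfl
  rw [show π * swap a (σ a) * (swap a (σ a) * σ) = π * σ by simp [mul_assoc]] at hind
  have hstep := numClasses_orbitSetoid_add_le_of_swap π σ a (σ a)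
  omega

end Orbits

theorem pLen_orbitSetoid {n : ℕ} (π : Perm (Fin n)) : pLen (orbitSetoid π) = permLen π := rfl

theorem pLen_add_pLen_sup_le {n : ℕ} {A B : Setoid (Fin n)} (hAB : A ≤ B) (C : Setoid (Fin n)) :
    pLen A + pLen (B ⊔ C) ≤ pLen B + pLen (A ⊔ C) := by
  have := numClasses_add_numClasses_sup_le hAB C
  simp only [pLen, numClasses] at this ⊢
  omega

theorem two_mul_pLen_sup_le_permLen_add {n : ℕ} (π σ : Perm (Fin n)) :
    2 * pLen (orbitSetoid π ⊔ orbitSetoid σ) ≤ permLen π + permLen σ + permLen (π * σ) := by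
  have := numClasses_orbitSetoid_add_le π σ
  simp only [pLen, permLen, cycleCount, numClasses, Nat.card_eq_fintype_card,
    Fintype.card_fin] at this ⊢
  omega

/-- For partitioned permutations `(𝒱,π), (𝒲,σ)`, the multiplicativity equation
`(𝒱,π)·(𝒲,σ) = (𝒱∨𝒲, πσ)`, i.e. `|(𝒱,π)|+|(𝒲,σ)| = |(𝒱∨𝒲,πσ)|`, holds if and only
if the following four conditions hold:
(1) `|π|+|σ|+|πσ| = 2|π∨σ|`; (2) `|𝒱|+|π∨σ| = |π|+|𝒱∨σ|`;
(3) `|𝒲|+|π∨σ| = |σ|+|π∨𝒲|`; (4) `|𝒱∨σ|+|π∨𝒲| = |𝒱∨𝒲|+|π∨σ|`. -/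
theorem ppLen_add_eq_iff {n : ℕ} (a b : PartitionedPerm n) :
    (ppLen a + ppLen b = 2 * pLen (a.part ⊔ b.part) - permLen (a.perm * b.perm)) ↔
      (permLen a.perm + permLen b.perm + permLen (a.perm * b.perm) =
          2 * pLen (orbitSetoid a.perm ⊔ orbitSetoid b.perm) ∧
        pLen a.part + pLen (orbitSetoid a.perm ⊔ orbitSetoid b.perm) =
          permLen a.perm + pLen (a.part ⊔ orbitSetoid b.perm) ∧
        pLen b.part + pLen (orbitSetoid a.perm ⊔ orbitSetoid b.perm) =
          permLen b.perm + pLen (orbitSetoid a.perm ⊔ b.part) ∧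
        pLen (a.part ⊔ orbitSetoid b.perm) + pLen (orbitSetoid a.perm ⊔ b.part) =
          pLen (a.part ⊔ b.part) + pLen (orbitSetoid a.perm ⊔ orbitSetoid b.perm)) := by
  have h₁ := two_mul_pLen_sup_le_permLen_add a.perm b.perm
  have h₂ := pLen_add_pLen_sup_le a.hle (orbitSetoid b.perm)
  have h₃ := pLen_add_pLen_sup_le b.hle (orbitSetoid a.perm)
  have h₄ := pLen_add_pLen_sup_le (sup_le_sup_right a.hle (orbitSetoid b.perm)) b.part
  rw [pLen_orbitSetoid] at h₂ h₃
  rw [sup_comm b.part, sup_comm (orbitSetoid b.perm)] at h₃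
  rw [sup_assoc, sup_assoc, sup_eq_right.2 b.hle] at h₄
  unfold ppLen
  omega
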